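/- Let ε ∈ (0,1], let f₂ : ℝ×[0,1] → ℝ be continuous, and let ω̂₁, ψ̂_L, ψ̂_R : ℝ×[0,1] → ℝ be C¹ with bounded values and bounded z-derivatives. Define ω̃₁(x,z) = ω̂₁(x,z) + (−f₂(x,0) + ε ∂_z ω̂₁(x,0)) ε^{−1/2} e^{−z/√ε} + z² e^{−z/√ε} ψ̂_L(x,z) + (f₂(x,1) − ε ∂_z ω̂₁(x,1)) ε^{−1/2} e^{−(1−z)/√ε} + (1−z)² e^{−(1−z)/√ε} ψ̂_R(x,z). Then there is a constant κ > 0, depending only on the sup norms of f₂, ∂_z ω̂₁, ψ̂_R, ψ̂_L, ∂_z ψ̂_R and ∂_z ψ̂_L (but not on ε), such that for all x: |∂_z ω̃₁(x,0) − f₂(x,0)/ε| ≤ κ ε^{−1} e^{−1/√ε} and |∂_z ω̃₁(x,1) − f₂(x,1)/ε| ≤ κ ε^{−1} e^{−1/√ε}; i.e., the sl-PINN prediction satisfies the Neumann boundary conditions ∂_z ω₁ = f₂/ε at z = 0, 1 up to an exponentially small (in ε) error. -/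

import Mathlib

/-!
At `z = 0` the `z²`-term has zero derivative, and the derivative of the left boundary-layer
term, `(f₂(x,0) - ε ∂_z ω̂₁(x,0)) / ε`, cancels `∂_z ω̂₁(x,0)` and produces exactly `f₂(x,0)/ε`.
What remains comes from the right layer: every term carries the factor `e^{-1/√ε}` and a
coefficient of size `O(ε⁻¹)`, since `1 ≤ ε^{-1/2} ≤ ε⁻¹` for `ε ≤ 1`. The boundary `z = 1` is
reduced to `z = 0` by the reflection `z ↦ 1 - z`, which exchanges the two layers.
-/

/-- The sl-PINN prediction for the vorticity component `ω₁^ε`: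
`ω̃₁(x,z) = ω̂₁(x,z) + (−f₂(x,0) + ε ∂_z ω̂₁(x,0)) ε^{−1/2} e^{−z/√ε}
  + z² e^{−z/√ε} ψ̂_L(x,z)
  + (f₂(x,1) − ε ∂_z ω̂₁(x,1)) ε^{−1/2} e^{−(1−z)/√ε}
  + (1−z)² e^{−(1−z)/√ε} ψ̂_R(x,z)`. -/
noncomputable def slPinnW1 (ε : ℝ) (f₂ what psiL psiR : ℝ → ℝ → ℝ) (x z : ℝ) : ℝ :=
  what x z
    + (-(f₂ x 0) + ε * deriv (fun z' => what x z') 0) * ε ^ (-(1:ℝ)/2)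
        * Real.exp (-z / Real.sqrt ε)
    + z ^ 2 * Real.exp (-z / Real.sqrt ε) * psiL x z
    + (f₂ x 1 - ε * deriv (fun z' => what x z') 1) * ε ^ (-(1:ℝ)/2)
        * Real.exp (-(1 - z) / Real.sqrt ε)
    + (1 - z) ^ 2 * Real.exp (-(1 - z) / Real.sqrt ε) * psiR x z

open Real

/-- `f₂` changes sign because the reflection `z ↦ 1 - z` negates `∂_z`. -/
lemma slPinnW1_eq_reflect (ε : ℝ) (f₂ what psiL psiR : ℝ → ℝ → ℝ) (x z : ℝ) :
    slPinnW1 ε f₂ what psiL psiR x z =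
      slPinnW1 ε (fun x z => -f₂ x (1 - z)) (fun x z => what x (1 - z))
        (fun x z => psiR x (1 - z)) (fun x z => psiL x (1 - z)) x (1 - z) := by
  simp only [slPinnW1, deriv_comp_const_sub (what x), sub_zero, sub_self, sub_sub_cancel]
  ring

lemma hasDerivAt_sq_mul_zero {h : ℝ → ℝ} (hh : DifferentiableAt ℝ h 0) :
    HasDerivAt (fun z => z ^ 2 * h z) 0 0 := by
  simpa using ((hasDerivAt_pow 2 0).fun_mul hh.hasDerivAt)

lemma hasDerivAt_exp_neg_div (s z : ℝ) :
    HasDerivAt (fun z => exp (-z / s)) (-exp (-z / s) / s) z := by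
  simpa [neg_div, div_eq_mul_inv] using ((hasDerivAt_id z).neg.div_const s).exp

lemma hasDerivAt_exp_neg_one_sub_div (s z : ℝ) :
    HasDerivAt (fun z => exp (-(1 - z) / s)) (exp (-(1 - z) / s) / s) z := by
  simpa [div_eq_mul_inv] using (((hasDerivAt_id z).const_sub 1).neg.div_const s).exp

lemma hasDerivAt_one_sub_sq_mul_exp_mul_zero (s : ℝ) {g : ℝ → ℝ} (hg : DifferentiableAt ℝ g 0) :
    HasDerivAt (fun z => (1 - z) ^ 2 * exp (-(1 - z) / s) * g z)
      (exp (-1 / s) * ((s⁻¹ - 2) * g 0 + deriv g 0)) 0 := by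
  have hsq : HasDerivAt (fun z : ℝ => (1 - z) ^ 2) (-2) 0 := by
    simpa using ((hasDerivAt_id (0:ℝ)).const_sub 1).fun_pow 2
  refine ((hsq.fun_mul (hasDerivAt_exp_neg_one_sub_div s 0)).fun_mul hg.hasDerivAt).congr_deriv ?_
  norm_num
  ring

lemma rpow_neg_one_div_two_eq_inv_sqrt {ε : ℝ} (hε : 0 ≤ ε) : ε ^ (-(1:ℝ)/2) = (√ε)⁻¹ := by
  rw [neg_div, rpow_neg hε, sqrt_eq_rpow]

lemma deriv_slPinnW1_zero_sub {ε : ℝ} (hε : 0 < ε) (f₂ what psiL psiR : ℝ → ℝ → ℝ) (x : ℝ)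
    (hw : DifferentiableAt ℝ (what x) 0) (hL : DifferentiableAt ℝ (psiL x) 0)
    (hR : DifferentiableAt ℝ (psiR x) 0) :
    deriv (fun z => slPinnW1 ε f₂ what psiL psiR x z) 0 - f₂ x 0 / ε =
      exp (-1 / √ε) * ((f₂ x 1 - ε * deriv (what x) 1) / ε
        + (1 / √ε - 2) * psiR x 0 + deriv (psiR x) 0) := by
  have hL' : HasDerivAt (fun z => z ^ 2 * exp (-z / √ε) * psiL x z) 0 0 := by
    simpa only [mul_assoc] using
      hasDerivAt_sq_mul_zero ((hasDerivAt_exp_neg_div _ 0).differentiableAt.fun_mul hL)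
  have hderiv := show HasDerivAt (fun z => slPinnW1 ε f₂ what psiL psiR x z) _ 0 from
    (((hw.hasDerivAt.fun_add ((hasDerivAt_exp_neg_div √ε 0).const_mul _)).fun_add hL').fun_add
      ((hasDerivAt_exp_neg_one_sub_div √ε 0).const_mul _)).fun_add
        (hasDerivAt_one_sub_sq_mul_exp_mul_zero √ε hR)
  rw [hderiv.deriv, rpow_neg_one_div_two_eq_inv_sqrt hε.le, ← mul_self_sqrt hε.le]
  field_simp
  norm_num
  ring

lemma abs_boundary_remainder_le {ε a b c d A B C D : ℝ} (hε : 0 < ε) (hε1 : ε ≤ 1)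
    (ha : |a| ≤ A) (hb : |b| ≤ B) (hc : |c| ≤ C) (hd : |d| ≤ D) :
    |(a - ε * b) / ε + (1 / √ε - 2) * c + d| ≤ (A + B + C + D) * ε⁻¹ := by
  have hεs : ε ≤ √ε := by
    nlinarith [sq_sqrt hε.le, sqrt_le_one.mpr hε1, sqrt_nonneg ε]
  have hs : 0 < √ε := sqrt_pos.2 hε
  have h1 : 1 ≤ 1 / √ε := one_le_one_div hs (sqrt_le_one.mpr hε1)
  have h2 : 1 / √ε ≤ ε⁻¹ := by rw [one_div]; exact inv_anti₀ hε hεs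
  have h1ε : 1 ≤ ε⁻¹ := h1.trans h2
  have hab : |(a - ε * b) / ε| ≤ (A + B) * ε⁻¹ := by
    rw [div_eq_mul_inv, abs_mul, abs_inv, abs_of_pos hε]
    gcongr
    calc |a - ε * b| ≤ |a| + ε * |b| := by
          simpa [abs_mul, abs_of_pos hε] using abs_sub a (ε * b)
      _ ≤ A + B := by nlinarith [abs_nonneg b]
  have hc' : |(1 / √ε - 2) * c| ≤ C * ε⁻¹ := by
    rw [abs_mul, mul_comm]
    gcongr
    · exact (abs_nonneg c).trans hc
    · rw [abs_le]; constructor <;> linarith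
  have hd' : |d| ≤ D * ε⁻¹ := by nlinarith [abs_nonneg d]
  calc _ ≤ |(a - ε * b) / ε| + |(1 / √ε - 2) * c| + |d| := abs_add_three _ _ _
    _ ≤ (A + B + C + D) * ε⁻¹ := by linarith

lemma abs_deriv_slPinnW1_zero_sub_le {ε : ℝ} (hε : 0 < ε) (hε1 : ε ≤ 1)
    {f₂ what psiL psiR : ℝ → ℝ → ℝ} {x Mf Mw MR MR' : ℝ}
    (hw : DifferentiableAt ℝ (what x) 0) (hL : DifferentiableAt ℝ (psiL x) 0)
    (hR : DifferentiableAt ℝ (psiR x) 0)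
    (hMf : |f₂ x 1| ≤ Mf) (hMw : |deriv (what x) 1| ≤ Mw)
    (hMR : |psiR x 0| ≤ MR) (hMR' : |deriv (psiR x) 0| ≤ MR') :
    |deriv (fun z => slPinnW1 ε f₂ what psiL psiR x z) 0 - f₂ x 0 / ε|
      ≤ (Mf + Mw + MR + MR') * ε⁻¹ * exp (-1 / √ε) := by
  rw [deriv_slPinnW1_zero_sub hε f₂ what psiL psiR x hw hL hR, abs_mul, abs_of_pos (exp_pos _),
    mul_comm]
  gcongr
  exact abs_boundary_remainder_le hε hε1 hMf hMw hMR hMR'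

lemma abs_deriv_slPinnW1_one_sub_le {ε : ℝ} (hε : 0 < ε) (hε1 : ε ≤ 1)
    {f₂ what psiL psiR : ℝ → ℝ → ℝ} {x Mf Mw ML ML' : ℝ}
    (hw : DifferentiableAt ℝ (what x) 1) (hL : DifferentiableAt ℝ (psiL x) 1)
    (hR : DifferentiableAt ℝ (psiR x) 1)
    (hMf : |f₂ x 0| ≤ Mf) (hMw : |deriv (what x) 0| ≤ Mw)
    (hML : |psiL x 1| ≤ ML) (hML' : |deriv (psiL x) 1| ≤ ML') :
    |deriv (fun z => slPinnW1 ε f₂ what psiL psiR x z) 1 - f₂ x 1 / ε|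
      ≤ (Mf + Mw + ML + ML') * ε⁻¹ * exp (-1 / √ε) := by
  have hreflect : (fun z => slPinnW1 ε f₂ what psiL psiR x z) = fun z =>
      slPinnW1 ε (fun x z => -f₂ x (1 - z)) (fun x z => what x (1 - z))
        (fun x z => psiR x (1 - z)) (fun x z => psiL x (1 - z)) x (1 - z) :=
    funext (slPinnW1_eq_reflect ε f₂ what psiL psiR x)
  rw [hreflect, deriv_comp_const_sub, sub_self, ← abs_neg]
  convert abs_deriv_slPinnW1_zero_sub_le hε hε1 (f₂ := fun x z => -f₂ x (1 - z))
    (what := fun x z => what x (1 - z)) (psiL := fun x z => psiR x (1 - z))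
    (psiR := fun x z => psiL x (1 - z))
    (differentiableAt_comp_const_sub.mpr (by simpa using hw))
    (differentiableAt_comp_const_sub.mpr (by simpa using hR))
    (differentiableAt_comp_const_sub.mpr (by simpa using hL)) (by simpa using hMf)
    (by simpa [deriv_comp_const_sub] using hMw) (by simpa using hML)
    (by simpa [deriv_comp_const_sub] using hML') using 2
  simp only [sub_zero]
  ring

lemma differentiable_apply_of_differentiable_uncurry {𝕜 E F G : Type*} [NontriviallyNormedField 𝕜]
    [NormedAddCommGroup E] [NormedSpace 𝕜 E] [NormedAddCommGroup F] [NormedSpace 𝕜 F]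
    [NormedAddCommGroup G] [NormedSpace 𝕜 G] {f : E → F → G}
    (hf : Differentiable 𝕜 (fun p : E × F => f p.1 p.2)) (x : E) : Differentiable 𝕜 (f x) :=
  hf.comp ((differentiable_const x).prodMk differentiable_id)

theorem statement16_general
    (f₂ what psiL psiR : ℝ → ℝ → ℝ)
    (hw : ContDiff ℝ 1 (fun p : ℝ × ℝ => what p.1 p.2))
    (hpsiL : ContDiff ℝ 1 (fun p : ℝ × ℝ => psiL p.1 p.2))
    (hpsiR : ContDiff ℝ 1 (fun p : ℝ × ℝ => psiR p.1 p.2))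
    (Mf Mw ML MR ML' MR' : ℝ)
    (hMf : ∀ x : ℝ, ∀ z ∈ Set.Icc (0:ℝ) 1, |f₂ x z| ≤ Mf)
    (hMw : ∀ x : ℝ, ∀ z ∈ Set.Icc (0:ℝ) 1, |deriv (fun z' => what x z') z| ≤ Mw)
    (hML : ∀ x : ℝ, ∀ z ∈ Set.Icc (0:ℝ) 1, |psiL x z| ≤ ML)
    (hMR : ∀ x : ℝ, ∀ z ∈ Set.Icc (0:ℝ) 1, |psiR x z| ≤ MR)
    (hML' : ∀ x : ℝ, ∀ z ∈ Set.Icc (0:ℝ) 1, |deriv (fun z' => psiL x z') z| ≤ ML')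
    (hMR' : ∀ x : ℝ, ∀ z ∈ Set.Icc (0:ℝ) 1, |deriv (fun z' => psiR x z') z| ≤ MR') :
    ∃ κ > 0, ∀ ε ∈ Set.Ioc (0:ℝ) 1, ∀ x : ℝ,
      |deriv (fun z => slPinnW1 ε f₂ what psiL psiR x z) 0 - f₂ x 0 / ε|
        ≤ κ * ε⁻¹ * Real.exp (-1 / Real.sqrt ε)
      ∧ |deriv (fun z => slPinnW1 ε f₂ what psiL psiR x z) 1 - f₂ x 1 / ε|
        ≤ κ * ε⁻¹ * Real.exp (-1 / Real.sqrt ε) := by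
  refine ⟨|Mf| + |Mw| + |ML| + |MR| + |ML'| + |MR'| + 1, by positivity, ?_⟩
  rintro ε ⟨hε, hε1⟩ x
  have h0 : (0:ℝ) ∈ Set.Icc (0:ℝ) 1 := ⟨le_rfl, zero_le_one⟩
  have h1 : (1:ℝ) ∈ Set.Icc (0:ℝ) 1 := ⟨zero_le_one, le_rfl⟩
  have hwx := differentiable_apply_of_differentiable_uncurry (hw.differentiable one_ne_zero) x
  have hLx := differentiable_apply_of_differentiable_uncurry (hpsiL.differentiable one_ne_zero) x
  have hRx := differentiable_apply_of_differentiable_uncurry (hpsiR.differentiable one_ne_zero) x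
  have habs := fun a : ℝ => le_abs_self a
  constructor
  · refine (abs_deriv_slPinnW1_zero_sub_le hε hε1 (hwx 0) (hLx 0) (hRx 0) (hMf x 1 h1)
      (hMw x 1 h1) (hMR x 0 h0) (hMR' x 0 h0)).trans ?_
    gcongr ?_ * _ * _
    linarith [habs Mf, habs Mw, habs MR, habs MR', abs_nonneg ML, abs_nonneg ML']
  · refine (abs_deriv_slPinnW1_one_sub_le hε hε1 (hwx 1) (hLx 1) (hRx 1) (hMf x 0 h0)
      (hMw x 0 h0) (hML x 1 h1) (hML' x 1 h1)).trans ?_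
    gcongr ?_ * _ * _
    linarith [habs Mf, habs Mw, habs ML, habs ML', abs_nonneg MR, abs_nonneg MR']

/-- For continuous `f₂` and `C¹` network outputs `ω̂₁, ψ̂_L, ψ̂_R` with
bounded values and bounded `z`-derivatives (bounds `Mf, Mw, ML, MR, ML', MR'`), there is a
constant `κ > 0` depending only on these bounds (not on `ε`) such that for all
`ε ∈ (0,1]` and all `x`,
`|∂_z ω̃₁(x,0) − f₂(x,0)/ε| ≤ κ ε⁻¹ e^{−1/√ε}` and
`|∂_z ω̃₁(x,1) − f₂(x,1)/ε| ≤ κ ε⁻¹ e^{−1/√ε}`. -/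
theorem statement16
    (f₂ what psiL psiR : ℝ → ℝ → ℝ)
    (hf₂ : Continuous (fun p : ℝ × ℝ => f₂ p.1 p.2))
    (hw : ContDiff ℝ 1 (fun p : ℝ × ℝ => what p.1 p.2))
    (hpsiL : ContDiff ℝ 1 (fun p : ℝ × ℝ => psiL p.1 p.2))
    (hpsiR : ContDiff ℝ 1 (fun p : ℝ × ℝ => psiR p.1 p.2))
    (Mf Mw ML MR ML' MR' : ℝ)
    (hMf : ∀ x : ℝ, ∀ z ∈ Set.Icc (0:ℝ) 1, |f₂ x z| ≤ Mf)
    (hMw : ∀ x : ℝ, ∀ z ∈ Set.Icc (0:ℝ) 1, |deriv (fun z' => what x z') z| ≤ Mw)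
    (hML : ∀ x : ℝ, ∀ z ∈ Set.Icc (0:ℝ) 1, |psiL x z| ≤ ML)
    (hMR : ∀ x : ℝ, ∀ z ∈ Set.Icc (0:ℝ) 1, |psiR x z| ≤ MR)
    (hML' : ∀ x : ℝ, ∀ z ∈ Set.Icc (0:ℝ) 1, |deriv (fun z' => psiL x z') z| ≤ ML')
    (hMR' : ∀ x : ℝ, ∀ z ∈ Set.Icc (0:ℝ) 1, |deriv (fun z' => psiR x z') z| ≤ MR') :
    ∃ κ > 0, ∀ ε ∈ Set.Ioc (0:ℝ) 1, ∀ x : ℝ,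
      |deriv (fun z => slPinnW1 ε f₂ what psiL psiR x z) 0 - f₂ x 0 / ε|
        ≤ κ * ε⁻¹ * Real.exp (-1 / Real.sqrt ε)
      ∧ |deriv (fun z => slPinnW1 ε f₂ what psiL psiR x z) 1 - f₂ x 1 / ε|
        ≤ κ * ε⁻¹ * Real.exp (-1 / Real.sqrt ε) :=
  statement16_general f₂ what psiL psiR hw hpsiL hpsiR Mf Mw ML MR ML' MR' hMf hMw hML hMR hML' hMR'
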